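/- arXiv:1907.05077 — 4 statements merged into one kernel-verified Lean document; each statement's English description precedes it below -/
import Mathlib

section
/- Let C ⊆ R^p be a closed cone with λ'Sλ > 0 for all nonzero λ ∈ C, where S is symmetric positive semidefinite. Suppose β̂ is the unique minimizer over β ∈ C of 1 − 2m'β + β'Sβ and λ̂ is the unique maximizer of m'λ over ({λ ∈ C : λ'Sλ = 1} ∪ {0}). Then if β̂ ≠ 0, λ̂ = β̂ / sqrt(β̂'S β̂), and if β̂ = 0, then λ̂ = 0. -/
/-!
Write `f b = 1 - 2 m'b + b'Sb`. Along the ray through `β̂` the objective is the quadratic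
`γ ↦ 1 - 2γ m'β̂ + γ² β̂'Sβ̂`, minimal at `γ = 1`, so `m'β̂ = β̂'Sβ̂ =: t` and `f β̂ = 1 - t`.
Along the ray through a unit vector `λ ∈ C` with `s = m'λ > 0` the objective reaches `1 - s²`,
so minimality of `β̂` gives `m'λ ≤ √t` on all of `{λ ∈ C : λ'Sλ = 1} ∪ {0}`. The bound is
attained by `β̂ / √t` (which is `0` when `β̂ = 0`), hence this is the unique maximizer `λ̂`.
-/

open Matrix

lemma dotProduct_mulVec_smul_smul {n R : Type*} [Fintype n] [CommRing R]
    (S : Matrix n n R) (l : n → R) (γ : R) :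
    (γ • l) ⬝ᵥ S *ᵥ (γ • l) = γ ^ 2 * (l ⬝ᵥ S *ᵥ l) := by
  rw [mulVec_smul, dotProduct_smul, smul_dotProduct, smul_eq_mul, smul_eq_mul]
  ring

section ConeProgram

variable {n : Type*} [Fintype n] (m : n → ℝ) (S : Matrix n n ℝ)

def quadObjective (b : n → ℝ) : ℝ := 1 - 2 * (m ⬝ᵥ b) + b ⬝ᵥ S *ᵥ b

lemma quadObjective_smul (b : n → ℝ) (γ : ℝ) :
    quadObjective m S (γ • b) = 1 - 2 * γ * (m ⬝ᵥ b) + γ ^ 2 * (b ⬝ᵥ S *ᵥ b) := by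
  rw [quadObjective, dotProduct_mulVec_smul_smul, dotProduct_smul, smul_eq_mul]
  ring

variable {m S} {C : Set (n → ℝ)} (hC : ∀ l ∈ C, ∀ γ : ℝ, 0 < γ → γ • l ∈ C)
  {β : n → ℝ} (hβ : β ∈ C) (hmin : IsMinOn (quadObjective m S) C β)
include hC hβ hmin

lemma dotProduct_eq_quadForm_of_isMinOn : m ⬝ᵥ β = β ⬝ᵥ S *ᵥ β := by
  have hray : IsLocalMin (fun γ : ℝ => 1 - γ * (2 * (m ⬝ᵥ β)) + γ ^ 2 * (β ⬝ᵥ S *ᵥ β)) 1 := by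
    filter_upwards [lt_mem_nhds one_pos] with γ hγ
    have hle := isMinOn_iff.mp hmin _ (hC β hβ γ hγ)
    rw [quadObjective_smul, quadObjective] at hle
    linarith
  have hderiv := (((hasDerivAt_id' (1 : ℝ)).mul_const (2 * (m ⬝ᵥ β))).const_sub 1).add
    ((hasDerivAt_pow 2 (1 : ℝ)).mul_const (β ⬝ᵥ S *ᵥ β))
  have hzero := hray.hasDerivAt_eq_zero hderiv
  norm_num at hzero
  linarith

lemma sq_dotProduct_le_quadForm_of_isMinOn {l : n → ℝ} (hl : l ∈ C) (hlS : l ⬝ᵥ S *ᵥ l = 1)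
    (hml : 0 < m ⬝ᵥ l) : (m ⬝ᵥ l) ^ 2 ≤ β ⬝ᵥ S *ᵥ β := by
  have hle := isMinOn_iff.mp hmin _ (hC l hl _ hml)
  rw [quadObjective_smul, hlS, quadObjective, dotProduct_eq_quadForm_of_isMinOn hC hβ hmin] at hle
  linarith

lemma dotProduct_le_sqrt_of_isMinOn {l : n → ℝ}
    (hl : l ∈ {l ∈ C | l ⬝ᵥ S *ᵥ l = 1} ∪ {0}) :
    m ⬝ᵥ l ≤ √(β ⬝ᵥ S *ᵥ β) := by
  rcases hl with ⟨hlC, hlS⟩ | rfl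
  · rcases le_or_gt (m ⬝ᵥ l) 0 with hml | hml
    · exact hml.trans (Real.sqrt_nonneg _)
    · exact Real.le_sqrt_of_sq_le (sq_dotProduct_le_quadForm_of_isMinOn hC hβ hmin hlC hlS hml)
  · simp

end ConeProgram

theorem stmt3_general {p : ℕ} (C : Set (Fin p → ℝ))
    (hCcone : ∀ l ∈ C, ∀ γ : ℝ, 0 < γ → γ • l ∈ C)
    (S : Matrix (Fin p) (Fin p) ℝ)
    (hSpos : ∀ l ∈ C, l ≠ 0 → 0 < l ⬝ᵥ S.mulVec l)
    (m : Fin p → ℝ) (βhat lhat : Fin p → ℝ)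
    (hβmem : βhat ∈ C)
    (hβuniq : ∀ b ∈ C, b ≠ βhat →
      1 - 2 * (m ⬝ᵥ βhat) + βhat ⬝ᵥ S.mulVec βhat < 1 - 2 * (m ⬝ᵥ b) + b ⬝ᵥ S.mulVec b)
    (hlmem : lhat ∈ {l ∈ C | l ⬝ᵥ S.mulVec l = 1} ∪ {0})
    (hluniq : ∀ l ∈ ({l ∈ C | l ⬝ᵥ S.mulVec l = 1} ∪ {0} : Set (Fin p → ℝ)),
      l ≠ lhat → m ⬝ᵥ l < m ⬝ᵥ lhat) :
    (βhat ≠ 0 → lhat = (Real.sqrt (βhat ⬝ᵥ S.mulVec βhat))⁻¹ • βhat) ∧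
    (βhat = 0 → lhat = 0) := by
  have hmin : IsMinOn (quadObjective m S) C βhat := isMinOn_iff.mpr fun b hb => by
    rcases eq_or_ne b βhat with rfl | hne
    · exact le_rfl
    · exact (hβuniq b hb hne).le
  set t := βhat ⬝ᵥ S *ᵥ βhat
  set u := (√t)⁻¹ • βhat
  have hu : u ∈ {l ∈ C | l ⬝ᵥ S *ᵥ l = 1} ∪ {0} := by
    rcases eq_or_ne βhat 0 with h0 | h0
    · exact Or.inr (by simp [u, h0])
    · have ht : 0 < t := hSpos βhat hβmem h0
      refine Or.inl ⟨hCcone βhat hβmem _ (by positivity), ?_⟩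
      rw [dotProduct_mulVec_smul_smul, inv_pow, Real.sq_sqrt ht.le, inv_mul_cancel₀ ht.ne']
  have hmu : m ⬝ᵥ u = √t := by
    rw [dotProduct_smul, smul_eq_mul, dotProduct_eq_quadForm_of_isMinOn hCcone hβmem hmin,
      ← div_eq_inv_mul, Real.div_sqrt]
  have hlu : lhat = u := by
    by_contra hne
    have hlt := hluniq u hu (Ne.symm hne)
    linarith [dotProduct_le_sqrt_of_isMinOn hCcone hβmem hmin hlmem]
  exact ⟨fun _ => hlu, fun h0 => by simp [hlu, u, h0]⟩

/-- Proposition 1: relation between the unique minimizer `β̂` of `1 - 2m'β + β'Sβ` over a closed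
cone `C` and the unique maximizer `λ̂` of `m'λ` over `({λ ∈ C : λ'Sλ = 1} ∪ {0})`. -/
theorem stmt3 {p : ℕ} (C : Set (Fin p → ℝ))
    (hCclosed : IsClosed C)
    (hCcone : ∀ l ∈ C, ∀ γ : ℝ, 0 < γ → γ • l ∈ C)
    (S : Matrix (Fin p) (Fin p) ℝ) (hS : S.PosSemidef)
    (hSpos : ∀ l ∈ C, l ≠ 0 → 0 < l ⬝ᵥ S.mulVec l)
    (m : Fin p → ℝ) (βhat lhat : Fin p → ℝ)
    (hβmem : βhat ∈ C)
    (hβuniq : ∀ b ∈ C, b ≠ βhat →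
      1 - 2 * (m ⬝ᵥ βhat) + βhat ⬝ᵥ S.mulVec βhat < 1 - 2 * (m ⬝ᵥ b) + b ⬝ᵥ S.mulVec b)
    (hlmem : lhat ∈ {l ∈ C | l ⬝ᵥ S.mulVec l = 1} ∪ {0})
    (hluniq : ∀ l ∈ ({l ∈ C | l ⬝ᵥ S.mulVec l = 1} ∪ {0} : Set (Fin p → ℝ)),
      l ≠ lhat → m ⬝ᵥ l < m ⬝ᵥ lhat) :
    (βhat ≠ 0 → lhat = (Real.sqrt (βhat ⬝ᵥ S.mulVec βhat))⁻¹ • βhat) ∧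
    (βhat = 0 → lhat = 0) :=
  stmt3_general C hCcone S hSpos m βhat lhat hβmem hβuniq hlmem hluniq
end

section
/- Let Σ be symmetric positive definite, C a cone, and μ a nonzero vector with μ ∈ ΣC (i.e., Σ⁻¹μ ∈ C). Then sup over {λ ∈ C : λ'Σλ = 1} of μ'λ equals sqrt(μ'Σ⁻¹μ), i.e., the constrained maximum attains the unconstrained Wald value. -/
/-!
Write `ν = Σ⁻¹μ`, so that `μ = Σν` and `μ'Σ⁻¹μ = ν'Σν > 0`. By Cauchy–Schwarz for the form
`(x, y) ↦ x'Σy`, every `λ` with `λ'Σλ = 1` has `μ'λ = ν'Σλ ≤ √(ν'Σν)`, and this bound is attained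
at the rescaling `ν / √(ν'Σν)`, which lies in `C` because `C` is a cone containing `ν`.
-/

open Matrix

namespace Matrix

variable {n : Type*} [Fintype n]

lemma IsHermitian.mulVec_dotProduct_comm {S : Matrix n n ℝ} (hS : S.IsHermitian) (x y : n → ℝ) :
    S *ᵥ x ⬝ᵥ y = x ⬝ᵥ S *ᵥ y := by
  rw [dotProduct_mulVec, ← mulVec_transpose, (isHermitian_iff_isSymm.mp hS).eq]

lemma PosSemidef.dotProduct_mulVec_sq_le {S : Matrix n n ℝ} (hS : S.PosSemidef) (x y : n → ℝ) :
    (x ⬝ᵥ S *ᵥ y) ^ 2 ≤ (x ⬝ᵥ S *ᵥ x) * (y ⬝ᵥ S *ᵥ y) := by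
  classical
  have h := (toBilin' S).apply_mul_apply_le_of_forall_zero_le
    (fun z => by simpa only [toBilin'_apply', star_trivial] using hS.dotProduct_mulVec_nonneg z) x y
  simp only [toBilin'_apply'] at h
  rwa [dotProduct_comm y, hS.isHermitian.mulVec_dotProduct_comm, ← sq] at h

lemma PosSemidef.dotProduct_mulVec_le_sqrt_mul_sqrt {S : Matrix n n ℝ} (hS : S.PosSemidef)
    (x y : n → ℝ) : x ⬝ᵥ S *ᵥ y ≤ √(x ⬝ᵥ S *ᵥ x) * √(y ⬝ᵥ S *ᵥ y) := by
  rw [← Real.sqrt_mul (by simpa using hS.dotProduct_mulVec_nonneg x)]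
  exact Real.le_sqrt_of_sq_le (hS.dotProduct_mulVec_sq_le x y)

lemma PosDef.isGreatest_mulVec_dotProduct_image {S : Matrix n n ℝ} (hS : S.PosDef)
    {C : Set (n → ℝ)} (hC : ∀ l ∈ C, ∀ γ : ℝ, 0 < γ → γ • l ∈ C) {ν : n → ℝ} (hνC : ν ∈ C)
    (hν : ν ≠ 0) :
    IsGreatest ((fun l => S *ᵥ ν ⬝ᵥ l) '' {l ∈ C | l ⬝ᵥ S *ᵥ l = 1}) √(ν ⬝ᵥ S *ᵥ ν) := by
  set q := ν ⬝ᵥ S *ᵥ ν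
  have hq : 0 < q := by simpa using hS.dotProduct_mulVec_pos hν
  have hsq : 0 < √q := Real.sqrt_pos.mpr hq
  refine ⟨⟨(√q)⁻¹ • ν, ⟨hC ν hνC _ (inv_pos.mpr hsq), ?_⟩, ?_⟩, ?_⟩
  · simp only [mulVec_smul, dotProduct_smul, smul_dotProduct, smul_eq_mul]
    field_simp
    exact (Real.sq_sqrt hq.le).symm
  · dsimp only
    rw [dotProduct_smul, hS.isHermitian.mulVec_dotProduct_comm, smul_eq_mul]
    field_simp
    exact (Real.sq_sqrt hq.le).symm
  · rintro _ ⟨l, ⟨-, hl⟩, rfl⟩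
    simpa only [hS.isHermitian.mulVec_dotProduct_comm, hl, Real.sqrt_one, mul_one]
      using hS.posSemidef.dotProduct_mulVec_le_sqrt_mul_sqrt ν l

end Matrix

/-- If `μ ≠ 0` and `Σ⁻¹μ ∈ C`, the constrained maximum of `μ'λ` over `{λ ∈ C : λ'Σλ = 1}`
attains the Wald value `√(μ'Σ⁻¹μ)`. -/
theorem stmt13 {p : ℕ} (Sig : Matrix (Fin p) (Fin p) ℝ) (hSig : Sig.PosDef)
    (C : Set (Fin p → ℝ)) (hCcone : ∀ l ∈ C, ∀ γ : ℝ, 0 < γ → γ • l ∈ C)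
    (μ : Fin p → ℝ) (hμ : μ ≠ 0) (hmem : Sig⁻¹.mulVec μ ∈ C) :
    IsGreatest ((fun l => μ ⬝ᵥ l) '' {l ∈ C | l ⬝ᵥ Sig.mulVec l = 1})
      (Real.sqrt (μ ⬝ᵥ Sig⁻¹.mulVec μ)) := by
  have hμ_eq : Sig *ᵥ (Sig⁻¹ *ᵥ μ) = μ := by
    rw [mulVec_mulVec, mul_nonsing_inv _ ((isUnit_iff_isUnit_det _).mp hSig.isUnit), one_mulVec]
  have hν : Sig⁻¹ *ᵥ μ ≠ 0 := fun h => hμ (by rw [← hμ_eq, h, mulVec_zero])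
  have key := hSig.isGreatest_mulVec_dotProduct_image hCcone hmem hν
  rwa [hμ_eq, dotProduct_comm] at key
end

section
/- Let S be a diagonal positive definite matrix and D a scone (closed under multiplication by positive definite diagonal matrices). If λ̂ is the unique maximizer of m'λ over ({λ ∈ D : λ'Sλ = 1} ∪ {0}) and β̂ ≠ 0 is the unique minimizer of ‖S^{-1/2}m − β‖₂² over β ∈ D, then λ̂ = S^{-1/2}β̂ / sqrt(β̂'β̂). -/
/-!
Put `a = S^{-1/2} m`. The substitution `u = S^{1/2} λ` maps `{λ ∈ D : λ'Sλ = 1}` onto the unit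
vectors of `D` (a scone is invariant under positive diagonal scaling) and turns `m'λ` into
`⟪a, u⟫`. Since `D` is in particular a cone, the projection `β̂` of `a` onto `D` is also the
projection onto the ray `ℝ₊ β̂`, so `t ↦ ‖a - t β̂‖²` has a critical point at `t = 1`, i.e.
`⟪a, β̂⟫ = ‖β̂‖²`. Hence `‖a - β̂‖² = ‖a‖² - ‖β̂‖²`, while a unit `u ∈ D` with `r = ⟪a, u⟫ > 0`
gives the competitor `r u ∈ D` with `‖a - r u‖² = ‖a‖² - r²`; so `⟪a, u⟫ ≤ ‖β̂‖`, with equality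
at `u = β̂ / ‖β̂‖`. Uniqueness of `λ̂` then forces `λ̂ = S^{-1/2} β̂ / ‖β̂‖`.
-/

open Matrix
open scoped InnerProductSpace

section Cone

variable {E : Type*} [NormedAddCommGroup E] [InnerProductSpace ℝ E] {K : Set E} {a β : E}

theorem inner_eq_norm_sq_of_isMinOn_cone (hK : ∀ x ∈ K, ∀ t : ℝ, 0 < t → t • x ∈ K)
    (hβ : β ∈ K) (hmin : IsMinOn (fun b => ‖a - b‖) K β) : ⟪a, β⟫_ℝ = ‖β‖ ^ 2 := by
  set f : ℝ → ℝ := fun t => ‖a - t • β‖ ^ 2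
  have hderiv : HasDerivAt f (2 * ⟪a - (1 : ℝ) • β, -((1 : ℝ) • β)⟫_ℝ) 1 :=
    (((hasDerivAt_id (1 : ℝ)).smul_const β).const_sub a).norm_sq
  have hlocmin : IsLocalMin f 1 := by
    filter_upwards [Ioi_mem_nhds one_pos] with t ht
    simp only [f, one_smul]
    gcongr
    exact isMinOn_iff.mp hmin _ (hK β hβ t ht)
  have h := hlocmin.hasDerivAt_eq_zero hderiv
  rw [one_smul, inner_neg_right, inner_sub_left, real_inner_self_eq_norm_sq] at h
  linarith

theorem inner_le_norm_of_isMinOn_cone (hK : ∀ x ∈ K, ∀ t : ℝ, 0 < t → t • x ∈ K)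
    (hβ : β ∈ K) (hmin : IsMinOn (fun b => ‖a - b‖) K β) {u : E} (hu : u ∈ K)
    (hu1 : ‖u‖ = 1) : ⟪a, u⟫_ℝ ≤ ‖β‖ := by
  set r := ⟪a, u⟫_ℝ
  rcases le_or_gt r 0 with hr | hr
  · exact hr.trans (norm_nonneg β)
  have hru : ‖a - r • u‖ ^ 2 = ‖a‖ ^ 2 - r ^ 2 := by
    rw [norm_sub_sq_real, inner_smul_right, norm_smul, hu1, Real.norm_of_nonneg hr.le]
    ring
  have hβa : ‖a - β‖ ^ 2 = ‖a‖ ^ 2 - ‖β‖ ^ 2 := by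
    rw [norm_sub_sq_real, inner_eq_norm_sq_of_isMinOn_cone hK hβ hmin]
    ring
  have hle : ‖a - β‖ ^ 2 ≤ ‖a - r • u‖ ^ 2 := by
    gcongr
    exact isMinOn_iff.mp hmin _ (hK u hu r hr)
  rw [hru, hβa] at hle
  exact (pow_le_pow_iff_left₀ hr.le (norm_nonneg β) two_ne_zero).mp (by linarith)

end Cone

section EuclideanCoordinates

variable {ι : Type*} [Fintype ι]

theorem sqrt_dotProduct_self (x : ι → ℝ) : √(x ⬝ᵥ x) = ‖WithLp.toLp 2 x‖ := by
  simp [EuclideanSpace.norm_eq, dotProduct, sq]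

theorem sum_sub_sq_eq_norm_sub_sq (x y : ι → ℝ) :
    ∑ j, (x j - y j) ^ 2 = ‖WithLp.toLp 2 x - WithLp.toLp 2 y‖ ^ 2 := by
  simp [EuclideanSpace.real_norm_sq_eq]

theorem isMinOn_norm_sub_of_sum_sub_sq_lt {D : Set (ι → ℝ)} {x β : ι → ℝ}
    (h : ∀ b ∈ D, b ≠ β → ∑ j, (x j - β j) ^ 2 < ∑ j, (x j - b j) ^ 2) :
    IsMinOn (fun b : EuclideanSpace ℝ ι => ‖WithLp.toLp 2 x - b‖) (WithLp.ofLp ⁻¹' D)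
      (WithLp.toLp 2 β) := by
  refine isMinOn_iff.mpr fun b hb => ?_
  obtain rfl | hne := eq_or_ne b (WithLp.toLp 2 β)
  · exact le_rfl
  have hlt := h b.ofLp hb fun h' => hne (by rw [← h', WithLp.toLp_ofLp])
  rw [sum_sub_sq_eq_norm_sub_sq, sum_sub_sq_eq_norm_sub_sq, WithLp.toLp_ofLp] at hlt
  exact (pow_le_pow_iff_left₀ (norm_nonneg _) (norm_nonneg _) two_ne_zero).mp hlt.le

variable [DecidableEq ι]

theorem dotProduct_diagonal_sq_mulVec_self (s l : ι → ℝ) :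
    l ⬝ᵥ (diagonal fun j => s j ^ 2) *ᵥ l = ‖WithLp.toLp 2 (diagonal s *ᵥ l)‖ ^ 2 := by
  simp only [EuclideanSpace.real_norm_sq_eq, dotProduct, mulVec_diagonal]
  exact Finset.sum_congr rfl fun j _ => by ring

theorem dotProduct_eq_inner_div_diagonal_mulVec {s : ι → ℝ} (hs : ∀ j, s j ≠ 0)
    (m l : ι → ℝ) :
    m ⬝ᵥ l = ⟪WithLp.toLp 2 (fun j => m j / s j), WithLp.toLp 2 (diagonal s *ᵥ l)⟫_ℝ := by
  simp only [EuclideanSpace.inner_toLp_toLp, dotProduct, mulVec_diagonal, star_trivial]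
  exact Finset.sum_congr rfl fun j _ => by field_simp [hs j]

theorem diagonal_mulVec_diagonal_inv_mulVec {s : ι → ℝ} (hs : ∀ j, s j ≠ 0) (v : ι → ℝ) :
    diagonal s *ᵥ (diagonal fun j => (s j)⁻¹) *ᵥ v = v := by
  ext j
  simp [mulVec_diagonal, hs j]

end EuclideanCoordinates

section Scone

variable {ι : Type*} [Fintype ι] [DecidableEq ι] {D : Set (ι → ℝ)}

def IsScone (D : Set (ι → ℝ)) : Prop :=
  ∀ l ∈ D, ∀ d : ι → ℝ, (∀ j, 0 < d j) → diagonal d *ᵥ l ∈ D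

theorem IsScone.smul_mem (hD : IsScone D) {l : ι → ℝ} (hl : l ∈ D) {t : ℝ} (ht : 0 < t) :
    t • l ∈ D := by
  simpa [mulVec_diagonal, funext_iff] using hD l hl (fun _ => t) fun _ => ht

theorem IsScone.smul_mem_preimage_ofLp (hD : IsScone D) :
    ∀ x ∈ (WithLp.ofLp ⁻¹' D : Set (EuclideanSpace ℝ ι)), ∀ t : ℝ, 0 < t →
      t • x ∈ WithLp.ofLp ⁻¹' D :=
  fun _ hx _ ht => hD.smul_mem hx ht

theorem IsScone.dotProduct_le_norm_of_isMinOn (hD : IsScone D) {s m β : ι → ℝ}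
    (hs : ∀ j, 0 < s j) (hβ : β ∈ D)
    (hmin : IsMinOn (fun b : EuclideanSpace ℝ ι => ‖WithLp.toLp 2 (fun j => m j / s j) - b‖)
      (WithLp.ofLp ⁻¹' D) (WithLp.toLp 2 β))
    {l : ι → ℝ} (hl : l ∈ D) (hlS : l ⬝ᵥ (diagonal fun j => s j ^ 2) *ᵥ l = 1) :
    m ⬝ᵥ l ≤ ‖WithLp.toLp 2 β‖ := by
  rw [dotProduct_eq_inner_div_diagonal_mulVec (fun j => (hs j).ne')]
  refine inner_le_norm_of_isMinOn_cone hD.smul_mem_preimage_ofLp hβ hmin (hD l hl s hs) ?_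
  rwa [dotProduct_diagonal_sq_mulVec_self, pow_eq_one_iff_of_nonneg (norm_nonneg _) two_ne_zero]
    at hlS

end Scone

/-- Proposition 2 (diagonal case): for a diagonal positive definite `S = diag(s₁²,…,s_p²)` and a
scone `D`, if `β̂ ≠ 0` is the unique minimizer of `‖S^{-1/2}m − β‖₂²` over `D` and `λ̂` is the
unique maximizer of `m'λ` over `({λ ∈ D : λ'Sλ = 1} ∪ {0})`, then
`λ̂ = S^{-1/2}β̂ / √(β̂'β̂)`. -/
theorem stmt17 {p : ℕ} (s : Fin p → ℝ) (hs : ∀ j, 0 < s j)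
    (D : Set (Fin p → ℝ))
    (hD : ∀ l ∈ D, ∀ d : Fin p → ℝ, (∀ j, 0 < d j) →
      (Matrix.diagonal d).mulVec l ∈ D)
    (m : Fin p → ℝ) (βhat lhat : Fin p → ℝ)
    (hβmem : βhat ∈ D) (hβne : βhat ≠ 0)
    (hβuniq : ∀ b ∈ D, b ≠ βhat →
      ∑ j, (m j / s j - βhat j) ^ 2 < ∑ j, (m j / s j - b j) ^ 2)
    (hlmem : lhat ∈
      {l ∈ D | l ⬝ᵥ (Matrix.diagonal fun j => (s j) ^ 2).mulVec l = 1} ∪ {0})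
    (hluniq : ∀ l ∈
      ({l ∈ D | l ⬝ᵥ (Matrix.diagonal fun j => (s j) ^ 2).mulVec l = 1} ∪ {0} :
        Set (Fin p → ℝ)), l ≠ lhat → m ⬝ᵥ l < m ⬝ᵥ lhat) :
    lhat = (Real.sqrt (βhat ⬝ᵥ βhat))⁻¹ •
      (Matrix.diagonal fun j => (s j)⁻¹).mulVec βhat := by
  have hmin := isMinOn_norm_sub_of_sum_sub_sq_lt hβuniq
  set β : EuclideanSpace ℝ (Fin p) := WithLp.toLp 2 βhat
  set lstar := (Real.sqrt (βhat ⬝ᵥ βhat))⁻¹ • (Matrix.diagonal fun j => (s j)⁻¹).mulVec βhat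
  have hinner : ⟪WithLp.toLp 2 (fun j => m j / s j), β⟫_ℝ = ‖β‖ ^ 2 :=
    inner_eq_norm_sq_of_isMinOn_cone (IsScone.smul_mem_preimage_ofLp hD) hβmem hmin
  have hs0 : ∀ j, s j ≠ 0 := fun j => (hs j).ne'
  have hβpos : 0 < ‖β‖ := norm_pos_iff.2 (by simpa [β] using hβne)
  have hSl : diagonal s *ᵥ lstar = ‖β‖⁻¹ • βhat := by
    rw [mulVec_smul, diagonal_mulVec_diagonal_inv_mulVec hs0, sqrt_dotProduct_self]
  have hlstar_mem : lstar ∈ D := by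
    refine IsScone.smul_mem hD (hD βhat hβmem _ fun j => inv_pos.2 (hs j)) ?_
    rw [sqrt_dotProduct_self]
    exact inv_pos.2 hβpos
  have hlstar_S : lstar ⬝ᵥ (diagonal fun j => s j ^ 2) *ᵥ lstar = 1 := by
    rw [dotProduct_diagonal_sq_mulVec_self, hSl, WithLp.toLp_smul, norm_smul, norm_inv, norm_norm,
      inv_mul_cancel₀ hβpos.ne', one_pow]
  have hm_lstar : m ⬝ᵥ lstar = ‖β‖ := by
    rw [dotProduct_eq_inner_div_diagonal_mulVec hs0, hSl, WithLp.toLp_smul, inner_smul_right,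
      hinner]
    field_simp
  by_contra hne
  have hlt : ‖β‖ < m ⬝ᵥ lhat :=
    hm_lstar ▸ hluniq lstar (Or.inl ⟨hlstar_mem, hlstar_S⟩) (Ne.symm hne)
  rcases hlmem with ⟨hlD, hlS⟩ | hl0
  · exact hlt.not_ge (IsScone.dotProduct_le_norm_of_isMinOn hD hs hβmem hmin hlD hlS)
  · rw [Set.mem_singleton_iff.mp hl0, dotProduct_zero] at hlt
    exact hlt.not_ge (norm_nonneg β)
end

section
/- Let X ∈ R^{n×p}, μ̂ = X'ι/n, Ĝ = X'X/n, Σ̂ = Ĝ − μ̂μ̂'. Let C be a closed cone with λ'Σ̂λ > 0 for all nonzero λ ∈ C. If β̂ ≠ 0 is the unique minimizer over β ∈ C of (1/n)‖ι − Xβ‖₂² and λ̂ is the unique maximizer of μ̂'λ over ({λ ∈ C : λ'Σ̂λ = 1} ∪ {0}), then λ̂ = β̂ / sqrt(β̂'Σ̂β̂). -/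
/-!
The empirical risk splits as `(1/n)‖ι − Xb‖² = (1 − μ̂'b)² + b'Σ̂b`, which depends on `b` only
through the linear form `μ̂'b` and the quadratic form `b'Σ̂b`. Since `C` is a cone, `β̂` also
minimises the risk along its own ray `γ ↦ γβ̂`; completing the square in `γ`, optimality at `γ = 1`
forces `m = m² + s` with `m = μ̂'β̂ > 0`, `s = β̂'Σ̂β̂`, so the minimal risk is `1 − m`. For a
feasible `λ` with `λ'Σ̂λ = 1` and `t = μ̂'λ > 0`, the best point on the ray through `λ` has risk
`1 − t²/(1 + t²)`, which cannot beat `1 − m`; this rearranges to `t √s ≤ m`. Hence `β̂/√s`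
maximises `μ̂'λ` over the feasible set, and uniqueness identifies it with `λ̂`.
-/

open Matrix

theorem sq_one_sub_mul_add_sq_mul_eq {m s : ℝ} (hc : m ^ 2 + s ≠ 0) (γ : ℝ) :
    (1 - γ * m) ^ 2 + γ ^ 2 * s
      = 1 - m ^ 2 / (m ^ 2 + s) + (m ^ 2 + s) * (γ - m / (m ^ 2 + s)) ^ 2 := by
  field_simp
  ring

theorem sq_one_sub_mul_add_sq_mul_of_eq_div {m s γ : ℝ} (hc : m ^ 2 + s ≠ 0)
    (hγ : γ = m / (m ^ 2 + s)) :
    (1 - γ * m) ^ 2 + γ ^ 2 * s = 1 - m ^ 2 / (m ^ 2 + s) := by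
  simp [sq_one_sub_mul_add_sq_mul_eq hc, hγ]

theorem pos_and_sq_add_eq_of_forall_le {m s : ℝ} (hs : 0 < s)
    (h : ∀ γ : ℝ, 0 < γ → (1 - m) ^ 2 + s ≤ (1 - γ * m) ^ 2 + γ ^ 2 * s) :
    0 < m ∧ m ^ 2 + s = m := by
  have hc : 0 < m ^ 2 + s := by positivity
  have hm : 0 < m := by nlinarith [h (1 / 2) (by norm_num)]
  refine ⟨hm, ?_⟩
  have hopt := h (m / (m ^ 2 + s)) (by positivity)
  rw [sq_one_sub_mul_add_sq_mul_of_eq_div hc.ne' rfl] at hopt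
  have hone := sq_one_sub_mul_add_sq_mul_eq hc.ne' 1
  rw [one_mul, one_pow, one_mul] at hone
  have h0 : (m ^ 2 + s) * (1 - m / (m ^ 2 + s)) ^ 2 = 0 :=
    le_antisymm (by linarith) (by positivity)
  have h1 : 1 - m / (m ^ 2 + s) = 0 :=
    pow_eq_zero_iff two_ne_zero |>.1 <| (mul_eq_zero.1 h0).resolve_left hc.ne'
  rwa [sub_eq_zero, eq_div_iff hc.ne', one_mul] at h1

theorem mul_sqrt_le_of_forall_le {m s t : ℝ} (hm : 0 < m) (hs : 0 ≤ s) (hms : m ^ 2 + s = m)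
    (h : ∀ γ : ℝ, 0 < γ → (1 - m) ^ 2 + s ≤ (1 - γ * t) ^ 2 + γ ^ 2) :
    t * √s ≤ m := by
  rcases le_or_gt t 0 with ht | ht
  · nlinarith [Real.sqrt_nonneg s]
  have hc : 0 < t ^ 2 + 1 := by positivity
  have hopt := h (t / (t ^ 2 + 1)) (by positivity)
  have hval := sq_one_sub_mul_add_sq_mul_of_eq_div (s := 1) hc.ne' rfl
  rw [mul_one] at hval
  rw [hval] at hopt
  have hvalm : (1 - m) ^ 2 + s = 1 - m := by linear_combination hms
  rw [hvalm, sub_le_sub_iff_left, div_le_iff₀ hc] at hopt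
  have : t ^ 2 * s ≤ m ^ 2 := by
    calc t ^ 2 * s = m * (t ^ 2 * (1 - m)) := by linear_combination t ^ 2 * hms
      _ ≤ m * m := by gcongr; linarith
      _ = m ^ 2 := by ring
  have : (t * √s) ^ 2 ≤ m ^ 2 := by rwa [mul_pow, Real.sq_sqrt hs]
  exact abs_le_of_sq_le_sq' this hm.le |>.2

theorem inv_mul_sum_sq_one_sub {ι : Type*} [Fintype ι] (hι : Fintype.card ι ≠ 0) (y : ι → ℝ) :
    (Fintype.card ι : ℝ)⁻¹ * ∑ i, (1 - y i) ^ 2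
      = (1 - (Fintype.card ι : ℝ)⁻¹ * ∑ i, y i) ^ 2
        + ((Fintype.card ι : ℝ)⁻¹ * ∑ i, y i ^ 2 - ((Fintype.card ι : ℝ)⁻¹ * ∑ i, y i) ^ 2) := by
  have hι' : (Fintype.card ι : ℝ) ≠ 0 := Nat.cast_ne_zero.2 hι
  simp only [sub_sq, Finset.sum_add_distrib, Finset.sum_sub_distrib, ← Finset.mul_sum,
    Finset.sum_const, Finset.card_univ, nsmul_eq_mul]
  field_simp
  ring

theorem inv_mul_sum_sq_one_sub_mulVec {ι κ : Type*} [Fintype ι] [Fintype κ]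
    (hι : Fintype.card ι ≠ 0) (X : Matrix ι κ ℝ) (b : κ → ℝ) :
    let μ := (Fintype.card ι : ℝ)⁻¹ • Xᵀ *ᵥ fun _ => 1
    (Fintype.card ι : ℝ)⁻¹ * ∑ i, (1 - (X *ᵥ b) i) ^ 2
      = (1 - μ ⬝ᵥ b) ^ 2 + b ⬝ᵥ ((Fintype.card ι : ℝ)⁻¹ • (Xᵀ * X) - vecMulVec μ μ) *ᵥ b := by
  intro μ
  have hμ : μ ⬝ᵥ b = (Fintype.card ι : ℝ)⁻¹ * ∑ i, (X *ᵥ b) i := by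
    rw [smul_dotProduct, mulVec_transpose, ← dotProduct_mulVec]
    simp [dotProduct]
  have hG : b ⬝ᵥ ((Fintype.card ι : ℝ)⁻¹ • (Xᵀ * X)) *ᵥ b
      = (Fintype.card ι : ℝ)⁻¹ * ∑ i, (X *ᵥ b) i ^ 2 := by
    rw [smul_mulVec, dotProduct_smul, ← mulVec_mulVec, dotProduct_mulVec, vecMul_transpose]
    simp [dotProduct, sq]
  have hμμ : b ⬝ᵥ vecMulVec μ μ *ᵥ b = (μ ⬝ᵥ b) ^ 2 := by
    rw [vecMulVec_mulVec, op_smul_eq_smul, dotProduct_smul, smul_eq_mul, dotProduct_comm b μ, sq]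
  rw [sub_mulVec, dotProduct_sub, hG, hμμ, hμ, inv_mul_sum_sq_one_sub hι]

theorem Matrix.toQuadraticForm'_apply {R ι : Type*} [CommRing R] [Fintype ι] [DecidableEq ι]
    (M : Matrix ι ι R) (v : ι → R) : M.toQuadraticForm' v = v ⬝ᵥ M *ᵥ v := by
  simp [Matrix.toQuadraticForm', toLinearMap₂'_apply']

section ConeRisk

variable {E : Type*} [AddCommGroup E] [Module ℝ E]

def risk (ℓ : E →ₗ[ℝ] ℝ) (Q : QuadraticForm ℝ E) (b : E) : ℝ := (1 - ℓ b) ^ 2 + Q b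

theorem risk_smul (ℓ : E →ₗ[ℝ] ℝ) (Q : QuadraticForm ℝ E) (γ : ℝ) (b : E) :
    risk ℓ Q (γ • b) = (1 - γ * ℓ b) ^ 2 + γ ^ 2 * Q b := by
  simp [risk, QuadraticMap.map_smul, sq]

variable {ℓ : E →ₗ[ℝ] ℝ} {Q : QuadraticForm ℝ E} {C : Set E} {β : E}

theorem risk_le_risk_smul (hC : ∀ l ∈ C, ∀ γ : ℝ, 0 < γ → γ • l ∈ C)
    (hmin : IsMinOn (risk ℓ Q) C β) {l : E} (hl : l ∈ C) {γ : ℝ} (hγ : 0 < γ) :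
    (1 - ℓ β) ^ 2 + Q β ≤ (1 - γ * ℓ l) ^ 2 + γ ^ 2 * Q l :=
  risk_smul ℓ Q γ l ▸ isMinOn_iff.1 hmin _ (hC l hl γ hγ)

theorem pos_and_sq_add_eq_of_isMinOn (hC : ∀ l ∈ C, ∀ γ : ℝ, 0 < γ → γ • l ∈ C)
    (hβ : β ∈ C) (hmin : IsMinOn (risk ℓ Q) C β) (hQ : 0 < Q β) :
    0 < ℓ β ∧ ℓ β ^ 2 + Q β = ℓ β :=
  pos_and_sq_add_eq_of_forall_le hQ fun _ hγ => by
    simpa using risk_le_risk_smul hC hmin hβ hγ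

theorem apply_mul_sqrt_le_of_isMinOn (hC : ∀ l ∈ C, ∀ γ : ℝ, 0 < γ → γ • l ∈ C)
    (hβ : β ∈ C) (hmin : IsMinOn (risk ℓ Q) C β) (hQ : 0 < Q β) {l : E} (hl : l ∈ C)
    (hQl : Q l = 1) : ℓ l * √(Q β) ≤ ℓ β := by
  obtain ⟨hpos, hfix⟩ := pos_and_sq_add_eq_of_isMinOn hC hβ hmin hQ
  refine mul_sqrt_le_of_forall_le hpos hQ.le hfix fun γ hγ => ?_
  simpa [hQl] using risk_le_risk_smul hC hmin hl hγ

theorem isMaxOn_inv_sqrt_smul_of_isMinOn (hC : ∀ l ∈ C, ∀ γ : ℝ, 0 < γ → γ • l ∈ C)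
    (hβ : β ∈ C) (hmin : IsMinOn (risk ℓ Q) C β) (hQ : 0 < Q β) :
    (√(Q β))⁻¹ • β ∈ {l ∈ C | Q l = 1} ∪ {0} ∧
      IsMaxOn ℓ ({l ∈ C | Q l = 1} ∪ {0}) ((√(Q β))⁻¹ • β) := by
  have hsqrt : 0 < √(Q β) := Real.sqrt_pos.2 hQ
  have hval : ℓ ((√(Q β))⁻¹ • β) = ℓ β / √(Q β) := by
    rw [map_smul, smul_eq_mul, inv_mul_eq_div]
  refine ⟨Or.inl ⟨hC β hβ _ (inv_pos.2 hsqrt), ?_⟩, isMaxOn_iff.2 fun l hl => ?_⟩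
  · rw [QuadraticMap.map_smul, smul_eq_mul, ← mul_inv, Real.mul_self_sqrt hQ.le,
      inv_mul_cancel₀ hQ.ne']
  rw [hval]
  rcases hl with ⟨hlC, hQl⟩ | rfl
  · rw [le_div_iff₀ hsqrt]
    exact apply_mul_sqrt_le_of_isMinOn hC hβ hmin hQ hlC hQl
  · rw [map_zero]
    exact div_nonneg (pos_and_sq_add_eq_of_isMinOn hC hβ hmin hQ).1.le hsqrt.le

end ConeRisk

theorem stmt19_general {n p : ℕ} (hn : 0 < n) (X : Matrix (Fin n) (Fin p) ℝ)
    (C : Set (Fin p → ℝ))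
    (hCcone : ∀ l ∈ C, ∀ γ : ℝ, 0 < γ → γ • l ∈ C)
    (μhat : Fin p → ℝ) (hμhat : μhat = (n : ℝ)⁻¹ • Xᵀ.mulVec (fun _ => 1))
    (Ghat Shat : Matrix (Fin p) (Fin p) ℝ)
    (hGhat : Ghat = (n : ℝ)⁻¹ • (Xᵀ * X))
    (hShat : Shat = Ghat - Matrix.vecMulVec μhat μhat)
    (hSpos : ∀ l ∈ C, l ≠ 0 → 0 < l ⬝ᵥ Shat.mulVec l)
    (βhat lhat : Fin p → ℝ)
    (hβmem : βhat ∈ C) (hβne : βhat ≠ 0)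
    (hβuniq : ∀ b ∈ C, b ≠ βhat →
      (n : ℝ)⁻¹ * ∑ i, (1 - X.mulVec βhat i) ^ 2
        < (n : ℝ)⁻¹ * ∑ i, (1 - X.mulVec b i) ^ 2)
    (hlmem : lhat ∈ {l ∈ C | l ⬝ᵥ Shat.mulVec l = 1} ∪ {0})
    (hluniq : ∀ l ∈ ({l ∈ C | l ⬝ᵥ Shat.mulVec l = 1} ∪ {0} : Set (Fin p → ℝ)),
      l ≠ lhat → μhat ⬝ᵥ l < μhat ⬝ᵥ lhat) :
    lhat = (Real.sqrt (βhat ⬝ᵥ Shat.mulVec βhat))⁻¹ • βhat := by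
  set ℓ := dotProductBilin ℝ ℝ μhat
  set Q := Shat.toQuadraticForm'
  have hQ (b : Fin p → ℝ) : Q b = b ⬝ᵥ Shat *ᵥ b := Matrix.toQuadraticForm'_apply Shat b
  have hrisk (b : Fin p → ℝ) : (n : ℝ)⁻¹ * ∑ i, (1 - (X *ᵥ b) i) ^ 2 = risk ℓ Q b := by
    have := inv_mul_sum_sq_one_sub_mulVec (by simpa using hn.ne') X b
    rw [Fintype.card_fin] at this
    rw [this, risk, hQ, dotProductBilin_apply_apply, hShat, hGhat, hμhat]
  have hmin : IsMinOn (risk ℓ Q) C βhat := isMinOn_iff.2 fun b hb => by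
    rcases eq_or_ne b βhat with rfl | hne
    · exact le_rfl
    · simpa only [hrisk] using (hβuniq b hb hne).le
  have hQβ : 0 < Q βhat := (hQ βhat).symm ▸ hSpos βhat hβmem hβne
  obtain ⟨hmem, hmax⟩ := isMaxOn_inv_sqrt_smul_of_isMinOn hCcone hβmem hmin hQβ
  simp only [hQ] at hmem hmax
  by_contra hne
  exact (hluniq _ hmem (Ne.symm hne)).not_ge (isMaxOn_iff.1 hmax _ hlmem)

/-- Proposition 3: for `μ̂ = X'ι/n`, `Ĝ = X'X/n`, `Σ̂ = Ĝ − μ̂μ̂'`, a closed cone `C` with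
`λ'Σ̂λ > 0` on `C \ {0}`, if `β̂ ≠ 0` is the unique minimizer of `(1/n)‖ι − Xβ‖₂²` over `C` and
`λ̂` is the unique maximizer of `μ̂'λ` over `({λ ∈ C : λ'Σ̂λ = 1} ∪ {0})`, then
`λ̂ = β̂ / √(β̂'Σ̂β̂)`. -/
theorem stmt19 {n p : ℕ} (hn : 0 < n) (X : Matrix (Fin n) (Fin p) ℝ)
    (C : Set (Fin p → ℝ)) (hCclosed : IsClosed C)
    (hCcone : ∀ l ∈ C, ∀ γ : ℝ, 0 < γ → γ • l ∈ C)
    (μhat : Fin p → ℝ) (hμhat : μhat = (n : ℝ)⁻¹ • Xᵀ.mulVec (fun _ => 1))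
    (Ghat Shat : Matrix (Fin p) (Fin p) ℝ)
    (hGhat : Ghat = (n : ℝ)⁻¹ • (Xᵀ * X))
    (hShat : Shat = Ghat - Matrix.vecMulVec μhat μhat)
    (hSpos : ∀ l ∈ C, l ≠ 0 → 0 < l ⬝ᵥ Shat.mulVec l)
    (βhat lhat : Fin p → ℝ)
    (hβmem : βhat ∈ C) (hβne : βhat ≠ 0)
    (hβuniq : ∀ b ∈ C, b ≠ βhat →
      (n : ℝ)⁻¹ * ∑ i, (1 - X.mulVec βhat i) ^ 2
        < (n : ℝ)⁻¹ * ∑ i, (1 - X.mulVec b i) ^ 2)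
    (hlmem : lhat ∈ {l ∈ C | l ⬝ᵥ Shat.mulVec l = 1} ∪ {0})
    (hluniq : ∀ l ∈ ({l ∈ C | l ⬝ᵥ Shat.mulVec l = 1} ∪ {0} : Set (Fin p → ℝ)),
      l ≠ lhat → μhat ⬝ᵥ l < μhat ⬝ᵥ lhat) :
    lhat = (Real.sqrt (βhat ⬝ᵥ Shat.mulVec βhat))⁻¹ • βhat :=
  stmt19_general hn X C hCcone μhat hμhat Ghat Shat hGhat hShat hSpos βhat lhat hβmem hβne hβuniq
    hlmem hluniq
end
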